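/- Let R be a ring whose classical left quotient ring Q_{l,cl}(R) = C_R⁻¹R exists and is semisimple (Artinian). Then the set of strongly left localizable elements L^s_l(R) = ⋂_{S ∈ max.Den_l(R)} S equals the set C_R of regular elements of R. -/

import Mathlib

/-- A left Ore set in a ring `R`: a multiplicative subset (`1 ∈ S`, `0 ∉ S`,
closed under multiplication) satisfying the left Ore condition. -/
def IsLeftOreSet (R : Type*) [Ring R] (S : Set R) : Prop :=
  (1 : R) ∈ S ∧ (0 : R) ∉ S ∧ (∀ s ∈ S, ∀ t ∈ S, s * t ∈ S) ∧
    ∀ (r : R), ∀ s ∈ S, ∃ s' ∈ S, ∃ r' : R, s' * r = r' * s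

/-- A left denominator set: a left Ore set such that `r * s = 0` implies
`t * r = 0` for some `t ∈ S`. -/
def IsLeftDenSet (R : Type*) [Ring R] (S : Set R) : Prop :=
  IsLeftOreSet R S ∧ ∀ (r : R), ∀ s ∈ S, r * s = 0 → ∃ t ∈ S, t * r = 0

/-- `ass(S) = {r ∈ R | s r = 0 for some s ∈ S}`. -/
def assSet (R : Type*) [Ring R] (S : Set R) : Set R :=
  {r : R | ∃ s ∈ S, s * r = 0}

/-- A maximal left denominator set of `R`. -/
def IsMaxLeftDenSet (R : Type*) [Ring R] (S : Set R) : Prop :=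
  IsLeftDenSet R S ∧ ∀ T : Set R, IsLeftDenSet R T → S ⊆ T → T = S

/-- The set `L^s_l(R)` of strongly left localizable elements: the intersection of
all maximal left denominator sets of `R`. -/
def stronglyLocalizable (R : Type*) [Ring R] : Set R :=
  {r : R | ∀ S : Set R, IsMaxLeftDenSet R S → r ∈ S}

/-- `T_l(R)`: the union of all left denominator sets contained in `L^s_l(R)`
(the largest strong left denominator set). -/
def Tl (R : Type*) [Ring R] : Set R :=
  ⋃₀ {S : Set R | IsLeftDenSet R S ∧ S ⊆ stronglyLocalizable R}

/-- The left localization radical `l_R = ⋂_{S ∈ max.Den_l(R)} ass(S)`. -/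
def lRad (R : Type*) [Ring R] : Set R :=
  {r : R | ∀ S : Set R, IsMaxLeftDenSet R S → r ∈ assSet R S}

/-- `f : R →+* Q` is a left Ore localization of `R` at `S`: elements of `S` become
units, every element of `Q` is of the form `s⁻¹ r`, and `ker f = ass(S)`. -/
def IsLeftLocalization (R : Type*) [Ring R] {Q : Type*} [Ring Q]
    (S : Set R) (f : R →+* Q) : Prop :=
  (∀ s ∈ S, IsUnit (f s)) ∧
  (∀ q : Q, ∃ s ∈ S, ∃ r : R, ∃ u : Qˣ, (u : Q) = f s ∧ q = (↑u⁻¹ : Q) * f r) ∧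
  (∀ r : R, f r = 0 ↔ r ∈ assSet R S)

/-- The set of regular elements (non-zero-divisors) of `R`. -/
def regSet (R : Type*) [Ring R] : Set R :=
  {c : R | ∀ r : R, (r * c = 0 → r = 0) ∧ (c * r = 0 → r = 0)}

/-!
By Wedderburn–Artin, `Q = ∏ Aᵢ` with every `Aᵢ` simple Artinian; let `gᵢ : R → Aᵢ` be the
components of the localization map and `Sᵢ = gᵢ⁻¹(Aᵢˣ)`. Each `gᵢ` is a left localization of `R`
at `Sᵢ`, so `Sᵢ` is a left denominator set. If a left denominator set `S` contains some `s` with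
`gᵢ s` not a unit, then a nonzero `y ∈ Aᵢ` with `y * gᵢ s = 0` lies in the two-sided ideal of
those `y` with `gᵢ t * (gᵢ c * y) = 0` for some `c ∈ Sᵢ`, `t ∈ S`; by simplicity this ideal
contains `1`, so `gᵢ t = 0` for some `t ∈ S`. This cannot happen for every `i`: the Ore condition
would give one `t ∈ S` with `g t = 0`, i.e. `t = 0`. Hence the maximal left denominator sets are
exactly the `Sᵢ`, and `⋂ Sᵢ = g⁻¹(Qˣ) = C_R`.
-/

section Ore

variable {R : Type*} [Ring R] {S : Set R}

theorem IsLeftOreSet.exists_mem_forall_mem (hS : IsLeftOreSet R S) {ι : Type*} [Fintype ι]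
    (I : ι → Ideal R) (h : ∀ i, ∃ t ∈ S, t ∈ I i) : ∃ t ∈ S, ∀ i, t ∈ I i := by
  classical
  obtain ⟨one_mem, -, mul_mem, ore⟩ := hS
  suffices ∀ s : Finset ι, ∃ t ∈ S, ∀ i ∈ s, t ∈ I i by simpa using this Finset.univ
  intro s
  induction s using Finset.induction_on with
  | empty => exact ⟨1, one_mem, by simp⟩
  | insert i s _ ih =>
    obtain ⟨t₁, ht₁, hi⟩ := h i
    obtain ⟨t₂, ht₂, hs⟩ := ih
    obtain ⟨u, hu, v, huv⟩ := ore t₂ t₁ ht₁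
    refine ⟨u * t₂, mul_mem u hu t₂ ht₂, ?_⟩
    simp only [Finset.mem_insert, forall_eq_or_imp]
    exact ⟨huv ▸ (I i).mul_mem_left v hi, fun j hj => (I j).mul_mem_left u (hs j hj)⟩

end Ore

section Localization

variable {R A B : Type*} [Ring R] [Ring A] [Ring B] {S : Set R} {h : R →+* A}

theorem IsLeftLocalization.exists_mul_eq (hh : IsLeftLocalization R S h) (q : A) :
    ∃ s ∈ S, ∃ r, h s * q = h r := by
  obtain ⟨s, hs, r, u, hu, rfl⟩ := hh.2.1 q
  exact ⟨s, hs, r, by rw [← hu, ← mul_assoc, Units.mul_inv, one_mul]⟩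

theorem IsLeftLocalization.ringEquiv_comp (hh : IsLeftLocalization R S h) (e : A ≃+* B) :
    IsLeftLocalization R S ((e : A →+* B).comp h) := by
  obtain ⟨hunit, hfrac, hker⟩ := hh
  refine ⟨fun s hs => (hunit s hs).map e, fun q => ?_, fun r => ?_⟩
  · obtain ⟨s, hs, r, u, hu, hq⟩ := hfrac (e.symm q)
    refine ⟨s, hs, r, Units.map (e : A →* B) u, by simp [hu], ?_⟩
    rw [← e.apply_symm_apply q, hq]
    simp
  · simpa using hker r

theorem isLeftLocalization_setOf_isUnit
    (hfrac : ∀ q : A, ∃ s, IsUnit (h s) ∧ ∃ r, h s * q = h r)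
    (hker : ∀ x, h x = 0 → ∃ s, IsUnit (h s) ∧ s * x = 0) :
    IsLeftLocalization R {r | IsUnit (h r)} h := by
  refine ⟨fun s hs => hs, fun q => ?_, fun x => ⟨hker x, ?_⟩⟩
  · obtain ⟨s, hs, r, hq⟩ := hfrac q
    exact ⟨s, hs, r, hs.unit, rfl, by rw [← hq, ← mul_assoc, IsUnit.val_inv_mul, one_mul]⟩
  · rintro ⟨s, hs, hsx⟩
    simpa [hs.mul_right_eq_zero] using congrArg h hsx

theorem isLeftDenSet_setOf_isUnit [Nontrivial A] (hh : IsLeftLocalization R {r | IsUnit (h r)} h) :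
    IsLeftDenSet R {r | IsUnit (h r)} := by
  refine ⟨⟨by simp, by simp, fun s hs t ht => by simpa using hs.mul ht, fun r s hs => ?_⟩,
    fun r s hs hrs => (hh.2.2 r).1 ?_⟩
  · obtain ⟨c, hc, b, hcb⟩ := hh.exists_mul_eq (h r * ↑(IsUnit.unit hs)⁻¹)
    have hker : h (c * r - b * s) = 0 := by
      rw [map_sub, map_mul, map_mul, ← hcb, mul_assoc, mul_assoc, IsUnit.val_inv_mul, mul_one,
        sub_self]
    obtain ⟨a, ha, hab⟩ := (hh.2.2 _).1 hker
    refine ⟨a * c, by simpa using ha.mul hc, a * b, ?_⟩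
    rw [mul_assoc, mul_assoc, ← sub_eq_zero, ← mul_sub, hab]
  · simpa [IsUnit.mul_left_eq_zero hs] using congrArg h hrs

end Localization

section Torsion

variable {R A : Type*} [Ring R] [Ring A] {S T : Set R} (h : R →+* A)

def leftTorsion (S : Set R) : Set A := {w | ∃ t ∈ S, h t * w = 0}

variable {h}

theorem map_mul_mem_leftTorsion (hS : IsLeftOreSet R S) (b : R) {w : A}
    (hw : w ∈ leftTorsion h S) : h b * w ∈ leftTorsion h S := by
  obtain ⟨t, ht, htw⟩ := hw
  obtain ⟨t', ht', b', hore⟩ := hS.2.2.2 b t ht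
  exact ⟨t', ht', by rw [← mul_assoc, ← map_mul, hore, map_mul, mul_assoc, htw, mul_zero]⟩

theorem add_mem_leftTorsion (hS : IsLeftOreSet R S) {w w' : A} (hw : w ∈ leftTorsion h S)
    (hw' : w' ∈ leftTorsion h S) : w + w' ∈ leftTorsion h S := by
  obtain ⟨t, ht, htw⟩ := hw
  obtain ⟨t', ht', htw'⟩ := hw'
  obtain ⟨u, hu, v, huv⟩ := hS.2.2.2 t' t ht
  refine ⟨u * t', hS.2.2.1 u hu t' ht', ?_⟩
  have hw_zero : h (u * t') * w = 0 := by rw [huv, map_mul, mul_assoc, htw, mul_zero]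
  rw [mul_add, hw_zero, map_mul, mul_assoc, htw', mul_zero, add_zero]

theorem mul_mem_leftTorsion {w : A} (hw : w ∈ leftTorsion h S) (x : A) :
    w * x ∈ leftTorsion h S := by
  obtain ⟨t, ht, htw⟩ := hw
  exact ⟨t, ht, by rw [← mul_assoc, htw, zero_mul]⟩

def torsionIdeal (hT : IsLeftOreSet R T) (hS : IsLeftOreSet R S)
    (hfrac : ∀ q : A, ∃ c ∈ T, ∃ b, h c * q = h b) : TwoSidedIdeal A :=
  .mk' {y | ∃ c ∈ T, h c * y ∈ leftTorsion h S}
    ⟨1, hT.1, 1, hS.1, by simp⟩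
    (by
      rintro y y' ⟨c, hc, hy⟩ ⟨c', hc', hy'⟩
      obtain ⟨u, hu, v, huv⟩ := hT.2.2.2 c c' hc'
      refine ⟨u * c, hT.2.2.1 u hu c hc, ?_⟩
      have hsplit : h (u * c) * (y + y') = h u * (h c * y) + h v * (h c' * y') := by
        rw [mul_add, ← mul_assoc, ← map_mul, ← mul_assoc (h v), ← map_mul, ← huv]
      rw [hsplit]
      exact add_mem_leftTorsion hS (map_mul_mem_leftTorsion hS u hy)
        (map_mul_mem_leftTorsion hS v hy'))
    (by
      rintro y ⟨c, hc, hy⟩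
      exact ⟨c, hc, by simpa using map_mul_mem_leftTorsion hS (-1) hy⟩)
    (by
      rintro x y ⟨c, hc, hy⟩
      obtain ⟨d, hd, b, hdb⟩ := hfrac x
      obtain ⟨u, hu, v, huv⟩ := hT.2.2.2 b c hc
      refine ⟨u * d, hT.2.2.1 u hu d hd, ?_⟩
      rw [map_mul, mul_assoc, ← mul_assoc (h d), hdb, ← mul_assoc, ← map_mul, huv, map_mul,
        mul_assoc]
      exact map_mul_mem_leftTorsion hS v hy)
    (by
      rintro y x ⟨c, hc, hy⟩
      exact ⟨c, hc, by simpa [mul_assoc] using mul_mem_leftTorsion hy x⟩)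

theorem mem_torsionIdeal {hT : IsLeftOreSet R T} {hS : IsLeftOreSet R S}
    {hfrac : ∀ q : A, ∃ c ∈ T, ∃ b, h c * q = h b} {y : A} :
    y ∈ torsionIdeal hT hS hfrac ↔ ∃ c ∈ T, h c * y ∈ leftTorsion h S :=
  TwoSidedIdeal.mem_mk' ..

theorem exists_mem_map_eq_zero_of_not_isUnit [IsSimpleRing A] [IsArtinianRing A]
    (hh : IsLeftLocalization R {r | IsUnit (h r)} h) (hS : IsLeftDenSet R S) {s : R}
    (hs : s ∈ S) (hns : ¬IsUnit (h s)) : ∃ t ∈ S, h t = 0 := by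
  have hT := (isLeftDenSet_setOf_isUnit hh).1
  obtain ⟨y, hys, hy⟩ : ∃ y, y * h s = 0 ∧ y ≠ 0 := by
    simpa [IsArtinianRing.isUnit_iff_isRightRegular, isRightRegular_iff_left_eq_zero_of_mul]
      using hns
  obtain ⟨c, hc, a, hca⟩ := hh.exists_mul_eq y
  obtain ⟨a', ha', ha's⟩ := (hh.2.2 (a * s)).1 (by rw [map_mul, ← hca, mul_assoc, hys, mul_zero])
  obtain ⟨t₀, ht₀, ht₀a⟩ := hS.2 (a' * a) s hs (by rw [mul_assoc, ha's])
  have hyI : y ∈ torsionIdeal hT hS.1 hh.exists_mul_eq := by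
    refine mem_torsionIdeal.2 ⟨a' * c, by simpa using ha'.mul hc, t₀, ht₀, ?_⟩
    rw [map_mul, mul_assoc, hca, ← map_mul, ← map_mul, ht₀a, map_zero]
  obtain ⟨c₁, hc₁, t, ht, htc⟩ :=
    mem_torsionIdeal.1 (IsSimpleRing.one_mem_of_ne_zero_mem _ hy hyI)
  exact ⟨t, ht, by simpa [IsUnit.mul_left_eq_zero hc₁] using htc⟩

end Torsion

section RegularLocalization

variable {R A : Type*} [Ring R] [Ring A] {f : R →+* A}

theorem IsLeftLocalization.injective_of_regSet (hf : IsLeftLocalization R (regSet R) f) :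
    Function.Injective f := by
  refine (injective_iff_map_eq_zero f).2 fun x hx => ?_
  obtain ⟨c, hc, hcx⟩ := (hf.2.2 x).1 hx
  exact (hc x).2 hcx

theorem IsLeftLocalization.isUnit_map_iff_mem_regSet (hf : IsLeftLocalization R (regSet R) f)
    {r : R} : IsUnit (f r) ↔ r ∈ regSet R := by
  refine ⟨fun hr x => ⟨fun hx => hf.injective_of_regSet ?_, fun hx => hf.injective_of_regSet ?_⟩,
    hf.1 r⟩
  · simpa [hr.mul_left_eq_zero] using congrArg f hx
  · simpa [hr.mul_right_eq_zero] using congrArg f hx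

end RegularLocalization

section Pi

variable {R ι : Type*} [Ring R] {A : ι → Type*} [∀ i, Ring (A i)] {g : R →+* Π i, A i}
  [DecidableEq ι]

theorem exists_isUnit_apply_and_apply_eq_zero (hg : IsLeftLocalization R (regSet R) g) (i : ι) :
    ∃ a, IsUnit (g a i) ∧ ∀ j ≠ i, g a j = 0 := by
  obtain ⟨c, hc, a, hca⟩ := hg.exists_mul_eq (Pi.single i 1)
  refine ⟨a, ?_, fun j hj => ?_⟩
  · simpa [← hca] using (hg.1 c hc).map (Pi.evalRingHom A i)
  · simp [← hca, hj]

theorem IsLeftLocalization.evalRingHom_comp (hg : IsLeftLocalization R (regSet R) g) (i : ι) :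
    IsLeftLocalization R {r | IsUnit (g r i)} ((Pi.evalRingHom A i).comp g) := by
  refine isLeftLocalization_setOf_isUnit (h := (Pi.evalRingHom A i).comp g) (fun q => ?_)
    (fun x hx => ?_)
  · obtain ⟨c, hc, b, hcb⟩ := hg.exists_mul_eq (Pi.single i q)
    exact ⟨c, (hg.1 c hc).map (Pi.evalRingHom A i), b, by simpa using congrFun hcb i⟩
  · obtain ⟨a, ha, hsupp⟩ := exists_isUnit_apply_and_apply_eq_zero hg i
    refine ⟨a, ha, hg.injective_of_regSet (funext fun j => ?_)⟩
    rcases eq_or_ne j i with rfl | hj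
    · simp only [RingHom.comp_apply, Pi.evalRingHom_apply] at hx
      simp [hx]
    · simp [hsupp j hj]

theorem isLeftDenSet_setOf_isUnit_apply [∀ i, Nontrivial (A i)]
    (hg : IsLeftLocalization R (regSet R) g) (i : ι) : IsLeftDenSet R {r | IsUnit (g r i)} :=
  isLeftDenSet_setOf_isUnit (h := (Pi.evalRingHom A i).comp g) (hg.evalRingHom_comp i)

variable [Fintype ι] [∀ i, IsSimpleRing (A i)] [∀ i, IsArtinianRing (A i)]

theorem IsLeftDenSet.exists_subset_setOf_isUnit_apply (hg : IsLeftLocalization R (regSet R) g)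
    {S : Set R} (hS : IsLeftDenSet R S) : ∃ i, S ⊆ {r | IsUnit (g r i)} := by
  by_contra! hnot
  have hker : ∀ i, ∃ t ∈ S, t ∈ RingHom.ker ((Pi.evalRingHom A i).comp g) := fun i => by
    obtain ⟨s, hs, hns⟩ := Set.not_subset.1 (hnot i)
    exact exists_mem_map_eq_zero_of_not_isUnit (hg.evalRingHom_comp i) hS hs hns
  obtain ⟨t, ht, htker⟩ := hS.1.exists_mem_forall_mem _ hker
  have ht0 : t = 0 := hg.injective_of_regSet (funext fun i => by simpa using htker i)
  exact hS.1.2.1 (ht0 ▸ ht)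

theorem isMaxLeftDenSet_setOf_isUnit_apply (hg : IsLeftLocalization R (regSet R) g) (i : ι) :
    IsMaxLeftDenSet R {r | IsUnit (g r i)} := by
  refine ⟨isLeftDenSet_setOf_isUnit_apply hg i, fun T hT hsub => ?_⟩
  obtain ⟨j, hj⟩ := hT.exists_subset_setOf_isUnit_apply hg
  obtain ⟨a, ha, hsupp⟩ := exists_isUnit_apply_and_apply_eq_zero hg i
  obtain rfl : j = i := by
    by_contra hji
    simpa [hsupp j hji] using hj (hsub ha)
  exact hj.antisymm hsub

theorem stronglyLocalizable_eq_regSet_of_pi (hg : IsLeftLocalization R (regSet R) g) :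
    stronglyLocalizable R = regSet R := by
  ext r
  rw [← hg.isUnit_map_iff_mem_regSet, Pi.isUnit_iff]
  refine ⟨fun hr i => hr _ (isMaxLeftDenSet_setOf_isUnit_apply hg i), fun hr S hS => ?_⟩
  obtain ⟨i, hi⟩ := hS.1.exists_subset_setOf_isUnit_apply hg
  rw [← hS.2 _ (isLeftDenSet_setOf_isUnit_apply hg i) hi]
  exact hr i

end Pi

theorem stmt14.{u} (R : Type u) [Ring R]
    (hden : IsLeftDenSet R (regSet R))
    (Q : Type u) [Ring Q] (f : R →+* Q)
    (hf : IsLeftLocalization R (regSet R) f)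
    (hss : IsSemisimpleRing Q) :
    stronglyLocalizable R = regSet R := by
  obtain ⟨n, D, d, _, _, ⟨e⟩⟩ := IsSemisimpleRing.exists_ringEquiv_pi_matrix_divisionRing Q
  exact stronglyLocalizable_eq_regSet_of_pi (hf.ringEquiv_comp e)
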